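/- The tensor S^{abcd} := ½(n^aP^{bc}n^d + n^bP^{ac}n^d + n^aP^{bd}n^c + n^bP^{ad}n^c − 2n^an^bP^{cd} − 2n^cn^dP^{ab}) representing the energy-momentum map has gauge weight −2: under P' = P − 2n⊗_sζ and n' = z⁻¹n, the tensor S' built from (P',n') equals z⁻²S. Consequently, if a symmetric (0,2)-tensor V has gauge weight q (transforms as V ↦ z^qV), then τ(V) has gauge weight q−2. -/

import Mathlib

/-!
Both `S` and `τ` are quadratic in `n`, so `n' = z⁻¹n` contributes exactly `z⁻²`. The shift
`P ↦ P − n⊗ζ − ζ⊗n` leaves them unchanged: in `S` the `ζ`-terms cancel pairwise, and in `τ` the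
change `−2 W(n,ζ)` of the trace `P^{ab}W_{ab}` cancels the `ζ`-terms of the other summands
(this is where the symmetry of `W` enters).
-/

open Module LinearMap

variable {V : Type*} [AddCommGroup V] [Module ℝ V] [FiniteDimensional ℝ V]

/-- The trace `P^{ab} W_{ab}`. -/
noncomputable def trP (P : Dual ℝ V →ₗ[ℝ] V) (W : V →ₗ[ℝ] Dual ℝ V) : ℝ :=
  LinearMap.trace ℝ V (P ∘ₗ W)

/-- The energy-momentum map, evaluated on two covectors. -/
noncomputable def tau (P : Dual ℝ V →ₗ[ℝ] V) (n : V) (W : V →ₗ[ℝ] Dual ℝ V)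
    (ω χ : Dual ℝ V) : ℝ :=
  ω n * χ (P (W n)) + χ n * ω (P (W n)) - W n n * χ (P ω) - ω n * χ n * trP P W

/-- The tensor `S^{abcd} = ½(n^aP^{bc}n^d + n^bP^{ac}n^d + n^aP^{bd}n^c + n^bP^{ad}n^c
- 2n^an^bP^{cd} - 2n^cn^dP^{ab})`, fully contracted with four covectors. -/
noncomputable def Sfun (P : Dual ℝ V →ₗ[ℝ] V) (n : V) (ω χ σ ρ : Dual ℝ V) : ℝ :=
  (1 / 2 : ℝ) * (ω n * σ (P χ) * ρ n + χ n * σ (P ω) * ρ n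
    + ω n * ρ (P χ) * σ n + χ n * ρ (P ω) * σ n
    - 2 * ω n * χ n * ρ (P σ) - 2 * σ n * ρ n * χ (P ω))

section

variable {E : Type*} [AddCommGroup E] [Module ℝ E]

noncomputable def gaugeShift (P : Dual ℝ E →ₗ[ℝ] E) (n ζ : E) : Dual ℝ E →ₗ[ℝ] E :=
  P - (Dual.eval ℝ E ζ).smulRight n - (Dual.eval ℝ E n).smulRight ζ

lemma gaugeShift_apply (P : Dual ℝ E →ₗ[ℝ] E) (n ζ : E) (ω : Dual ℝ E) :
    gaugeShift P n ζ ω = P ω - ω ζ • n - ω n • ζ := by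
  simp [gaugeShift]

lemma Sfun_smul (P : Dual ℝ E →ₗ[ℝ] E) (c : ℝ) (n : E) (ω χ σ ρ : Dual ℝ E) :
    Sfun P (c • n) ω χ σ ρ = c ^ 2 * Sfun P n ω χ σ ρ := by
  simp only [Sfun, map_smul, smul_eq_mul]
  ring

lemma Sfun_gaugeShift (P : Dual ℝ E →ₗ[ℝ] E) (n ζ : E) (ω χ σ ρ : Dual ℝ E) :
    Sfun (gaugeShift P n ζ) n ω χ σ ρ = Sfun P n ω χ σ ρ := by
  simp only [Sfun, gaugeShift_apply, map_sub, map_smul, smul_eq_mul]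
  ring

lemma trP_smul (P : Dual ℝ E →ₗ[ℝ] E) (c : ℝ) (W : E →ₗ[ℝ] Dual ℝ E) :
    trP P (c • W) = c * trP P W := by
  rw [trP, trP, comp_smul, map_smul, smul_eq_mul]

lemma trP_gaugeShift [FiniteDimensional ℝ E] (P : Dual ℝ E →ₗ[ℝ] E) (n ζ : E)
    (W : E →ₗ[ℝ] Dual ℝ E) :
    trP (gaugeShift P n ζ) W = trP P W - W n ζ - W ζ n := by
  have hcomp : gaugeShift P n ζ ∘ₗ W = P ∘ₗ W - ((Dual.eval ℝ E ζ) ∘ₗ W).smulRight n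
      - ((Dual.eval ℝ E n) ∘ₗ W).smulRight ζ := by
    ext x; simp [gaugeShift]
  simp [trP, hcomp, trace_smulRight]

lemma tau_smul_left (P : Dual ℝ E →ₗ[ℝ] E) (c : ℝ) (n : E) (W : E →ₗ[ℝ] Dual ℝ E)
    (ω χ : Dual ℝ E) : tau P (c • n) W ω χ = c ^ 2 * tau P n W ω χ := by
  simp only [tau, map_smul, LinearMap.smul_apply, smul_eq_mul]
  ring

lemma tau_smul_right (P : Dual ℝ E →ₗ[ℝ] E) (n : E) (c : ℝ) (W : E →ₗ[ℝ] Dual ℝ E)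
    (ω χ : Dual ℝ E) : tau P n (c • W) ω χ = c * tau P n W ω χ := by
  simp only [tau, trP_smul, map_smul, LinearMap.smul_apply, smul_eq_mul]
  ring

lemma tau_gaugeShift [FiniteDimensional ℝ E] (P : Dual ℝ E →ₗ[ℝ] E) (n ζ : E)
    (W : E →ₗ[ℝ] Dual ℝ E) (hW : ∀ x y, W x y = W y x) (ω χ : Dual ℝ E) :
    tau (gaugeShift P n ζ) n W ω χ = tau P n W ω χ := by
  simp only [tau, gaugeShift_apply, map_sub, map_smul, smul_eq_mul]
  rw [trP_gaugeShift, hW ζ n]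
  ring

end

theorem S_has_gauge_weight_minus_two_general
    (n : V) (P : Dual ℝ V →ₗ[ℝ] V)
    (z : ℝ) (hz : z ≠ 0) (ζ : V)
    (P' : Dual ℝ V →ₗ[ℝ] V)
    (hP' : P' = P - (Dual.eval ℝ V ζ).smulRight n - (Dual.eval ℝ V n).smulRight ζ)
    (n' : V) (hn' : n' = z⁻¹ • n) :
    (∀ ω χ σ ρ : Dual ℝ V, Sfun P' n' ω χ σ ρ = (z ^ 2)⁻¹ * Sfun P n ω χ σ ρ) ∧
    (∀ (q : ℤ) (W : V →ₗ[ℝ] Dual ℝ V), (∀ x y, W x y = W y x) →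
      ∀ ω χ : Dual ℝ V,
        tau P' n' ((z ^ q : ℝ) • W) ω χ = z ^ (q - 2) * tau P n W ω χ) := by
  obtain rfl : P' = gaugeShift P n ζ := hP'
  subst hn'
  refine ⟨fun ω χ σ ρ => ?_, fun q W hW ω χ => ?_⟩
  · rw [Sfun_smul, Sfun_gaugeShift, inv_pow]
  · rw [tau_smul_left, tau_smul_right, tau_gaugeShift _ _ _ _ hW, zpow_sub₀ hz, inv_pow,
      zpow_two]
    ring

/-- The tensor `S` representing the energy-momentum map has gauge weight `-2`: under
`P' = P - 2n⊗ₛζ`, `n' = z⁻¹n` one has `S' = z⁻² S`.  Consequently if `V` has gauge weight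
`q` then `τ(V)` has gauge weight `q - 2`. -/
theorem S_has_gauge_weight_minus_two
    (γ : V →ₗ[ℝ] Dual ℝ V) (ℓ : Dual ℝ V) (l2 : ℝ) (n : V) (P : Dual ℝ V →ₗ[ℝ] V)
    (hγsym : ∀ x y, γ x y = γ y x)
    (hγn : γ n = 0)
    (hℓn : ℓ n = 1)
    (hPsym : ∀ ω χ : Dual ℝ V, ω (P χ) = χ (P ω))
    (hPℓ : P ℓ + l2 • n = 0)
    (hPγ : ∀ x : V, P (γ x) + ℓ x • n = x)
    (z : ℝ) (hz : z ≠ 0) (ζ : V)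
    (P' : Dual ℝ V →ₗ[ℝ] V)
    (hP' : P' = P - (Dual.eval ℝ V ζ).smulRight n - (Dual.eval ℝ V n).smulRight ζ)
    (n' : V) (hn' : n' = z⁻¹ • n) :
    (∀ ω χ σ ρ : Dual ℝ V, Sfun P' n' ω χ σ ρ = (z ^ 2)⁻¹ * Sfun P n ω χ σ ρ) ∧
    (∀ (q : ℤ) (W : V →ₗ[ℝ] Dual ℝ V), (∀ x y, W x y = W y x) →
      ∀ ω χ : Dual ℝ V,
        tau P' n' ((z ^ q : ℝ) • W) ω χ = z ^ (q - 2) * tau P n W ω χ) :=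
  S_has_gauge_weight_minus_two_general n P z hz ζ P' hP' n' hn'
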